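/- arXiv:1103.4010 — 4 statements merged into one kernel-verified Lean document; each statement's English description precedes it below -/
import Mathlib

section
/- Let σ ⊆ N_ℚ be a polyhedral cone with dual ω = σ^∨ ⊆ M_ℚ, and for each ρ in a finite index set R let Δ_ρ ⊆ N_ℚ be a nonempty polyhedron with tailcone σ, and v_ρ ∈ N'_ℚ. Define σ̃ = pos((σ × {0}) ∪ ⋃_{ρ∈R} (Δ_ρ × {v_ρ})) ⊆ N_ℚ × N'_ℚ. Then the dual cone of σ̃ is ω̃ = {(u,u') ∈ M_ℚ × M'_ℚ | u ∈ ω and ⟨v_ρ,u'⟩ + inf_{x∈Δ_ρ}⟨x,u⟩ ≥ 0 for all ρ ∈ R}. -/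
/-- The convex cone generated by a set: all finite nonnegative rational combinations. -/
def posSpan {V : Type*} [AddCommGroup V] [Module ℚ V] (S : Set V) : Set V :=
  {x | ∃ (n : ℕ) (a : Fin n → ℚ) (g : Fin n → V),
    (∀ i, 0 ≤ a i) ∧ (∀ i, g i ∈ S) ∧ x = ∑ i, a i • g i}

/-- With `σ ⊆ N_ℚ` a polyhedral cone with dual `ω`, nonempty polyhedra `Δ_ρ`
with tailcone `σ`, and `v_ρ ∈ N'_ℚ`, the dual of
`σ̃ = pos((σ × {0}) ∪ ⋃_ρ (Δ_ρ × {v_ρ}))` is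
`ω̃ = {(u,u') | u ∈ ω and ⟨v_ρ,u'⟩ + inf_{x∈Δ_ρ}⟨x,u⟩ ≥ 0 for all ρ}`, the latter condition
expressed equivalently as `∀ x ∈ Δ_ρ, ⟨v_ρ,u'⟩ + ⟨x,u⟩ ≥ 0`. -/
theorem dual_of_upgraded_cone
    {N N' : Type*} [AddCommGroup N] [Module ℚ N] [FiniteDimensional ℚ N]
    [AddCommGroup N'] [Module ℚ N'] [FiniteDimensional ℚ N']
    {ι : Type*} [Fintype ι] {R : Type*} [Fintype R] {κ : Type*} [Fintype κ]
    (fσ : ι → Module.Dual ℚ N)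
    (σ : Set N) (hσ : σ = {x | ∀ i, 0 ≤ fσ i x})
    (ω : Set (Module.Dual ℚ N)) (hω : ω = {u | ∀ v ∈ σ, 0 ≤ u v})
    (Δ : R → Set N) (hne : ∀ ρ, (Δ ρ).Nonempty)
    (g : R → κ → Module.Dual ℚ N) (d : R → κ → ℚ)
    (hΔ : ∀ ρ, Δ ρ = {x | ∀ j, d ρ j ≤ g ρ j x})
    (htail : ∀ ρ, {w : N | ∀ x ∈ Δ ρ, w + x ∈ Δ ρ} = σ)
    (v : R → N')
    (σt : Set (N × N'))
    (hσt : σt = posSpan ((σ ×ˢ ({0} : Set N')) ∪ ⋃ ρ, Δ ρ ×ˢ ({v ρ} : Set N'))) :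
    {p : Module.Dual ℚ N × Module.Dual ℚ N' | ∀ q ∈ σt, 0 ≤ p.1 q.1 + p.2 q.2}
      = {p : Module.Dual ℚ N × Module.Dual ℚ N' |
          p.1 ∈ ω ∧ ∀ ρ, ∀ x ∈ Δ ρ, 0 ≤ p.2 (v ρ) + p.1 x} := by
  subst hσt hω
  ext p
  simp only [Set.mem_setOf_eq]
  constructor
  · intro h
    constructor
    · intro x hx
      have := h (x, (0 : N'))
        ⟨1, fun _ => 1, fun _ => (x, 0), fun _ => zero_le_one,
          fun _ => Or.inl ⟨hx, rfl⟩, by simp⟩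
      simpa using this
    · intro ρ x hx
      have := h (x, v ρ)
        ⟨1, fun _ => 1, fun _ => (x, v ρ), fun _ => zero_le_one,
          fun _ => Or.inr (Set.mem_iUnion.2 ⟨ρ, ⟨hx, rfl⟩⟩), by simp⟩
      linarith
  · rintro ⟨hω, hΔc⟩ q ⟨n, a, gg, ha, hg, hq⟩
    have key : ∀ i, 0 ≤ p.1 (gg i).1 + p.2 (gg i).2 := by
      intro i
      rcases hg i with h1 | h2
      · obtain ⟨hx, h0⟩ := h1
        have : (gg i).2 = 0 := h0
        rw [this]
        simpa using hω _ hx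
      · obtain ⟨ρ, hρ⟩ := Set.mem_iUnion.1 h2
        obtain ⟨hx, hv⟩ := hρ
        have : (gg i).2 = v ρ := hv
        rw [this]
        have := hΔc ρ _ hx
        linarith
    subst hq
    have h1 : (∑ i, a i • gg i).1 = ∑ i, a i • (gg i).1 := by
      simp [Prod.fst_sum]
    have h2 : (∑ i, a i • gg i).2 = ∑ i, a i • (gg i).2 := by
      simp [Prod.snd_sum]
    rw [h1, h2, map_sum, map_sum, ← Finset.sum_add_distrib]
    refine Finset.sum_nonneg fun i _ => ?_
    rw [map_smul, map_smul, smul_eq_mul, smul_eq_mul, ← mul_add]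
    exact mul_nonneg (ha i) (key i)
end

section
/- Let Box ⊆ M_ℚ be a full-dimensional polyhedron and Ψ : Box → ℚ a piecewise-affine concave function with linear part Ψ^lin on tail(Box). Define Box* = { v ∈ N_ℚ | ⟨v,w⟩ ≥ Ψ^lin(w) for all w ∈ tail(Box) } and Ψ*(v) = min_{u∈Box}(⟨v,u⟩ − Ψ(u)). Then the minimum defining Ψ*(v) is attained and finite for every v ∈ Box*, and Ψ* : Box* → ℚ is concave and piecewise affine. -/
open Filter

lemma lp_descent {V : Type*} [AddCommGroup V] [Module ℚ V]
    {ρ : Type*} [Fintype ρ]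
    (a : ρ → V →ₗ[ℚ] ℚ) (β : ρ → ℚ) (L : V →ₗ[ℚ] ℚ)
    (hrec : ∀ d : V, (∀ r, 0 ≤ a r d) → 0 ≤ L d) :
    ∀ (n : ℕ) (x : V), (Finset.univ.filter fun r => a r x ≠ β r).card ≤ n →
      (∀ r, β r ≤ a r x) →
      ∃ y : V, (∀ r, β r ≤ a r y) ∧ L y ≤ L x ∧
        ∀ d : V, (∀ r, a r y = β r → a r d = 0) → L d = 0 := by
  classical
  intro n
  induction n with
  | zero =>
    intro x hcard hx
    have hact : ∀ r, a r x = β r := by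
      intro r
      by_contra hr
      have : r ∈ Finset.univ.filter fun r => a r x ≠ β r := by
        simp [hr]
      have := Finset.card_pos.2 ⟨r, this⟩
      omega
    refine ⟨x, hx, le_refl _, ?_⟩
    intro d hd
    have hd' : ∀ r, a r d = 0 := fun r => hd r (hact r)
    have h1 : 0 ≤ L d := hrec d fun r => (hd' r).ge
    have h2 : 0 ≤ L (-d) := hrec (-d) fun r => by rw [map_neg, hd' r, neg_zero]
    rw [map_neg] at h2
    linarith
  | succ n ih =>
    intro x hcard hx
    by_cases hW : ∀ d : V, (∀ r, a r x = β r → a r d = 0) → L d = 0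
    · exact ⟨x, hx, le_refl _, hW⟩
    · push_neg at hW
      obtain ⟨d₀, hd₀W, hd₀ne⟩ := hW
      obtain ⟨d, hdW, hdneg⟩ : ∃ d : V, (∀ r, a r x = β r → a r d = 0) ∧ L d < 0 := by
        rcases lt_or_gt_of_ne hd₀ne with h | h
        · exact ⟨d₀, hd₀W, h⟩
        · refine ⟨-d₀, fun r hr => by rw [map_neg, hd₀W r hr, neg_zero], ?_⟩
          rw [map_neg]; linarith
      have hJex : ∃ r, a r d < 0 := by
        by_contra h
        push_neg at h
        exact absurd (hrec d fun r => h r) (not_le.2 hdneg)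
      obtain ⟨r₁, hr₁⟩ := hJex
      set J : Finset ρ := Finset.univ.filter fun r => a r d < 0 with hJ
      have hJne : J.Nonempty := ⟨r₁, by simp [hJ, hr₁]⟩
      set τ : ρ → ℚ := fun r => (a r x - β r) / (-(a r d)) with hτ
      set t : ℚ := J.inf' hJne τ with ht
      have ht0 : 0 ≤ t := by
        apply Finset.le_inf'
        intro r hr
        have hrd : a r d < 0 := by simpa [hJ] using hr
        exact div_nonneg (sub_nonneg.2 (hx r)) (by linarith)
      obtain ⟨rs, hrsJ, hrs⟩ := Finset.exists_mem_eq_inf' hJne τ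
      have hrsd : a rs d < 0 := by simpa [hJ] using hrsJ
      set x' : V := x + t • d with hx'
      have heval : ∀ r, a r x' = a r x + t * a r d := by
        intro r; simp [hx', map_add, map_smul, smul_eq_mul]
      have hτmul : ∀ r, a r d < 0 → τ r * a r d = β r - a r x := by
        intro r hrd
        have hc : -(a r d) ≠ 0 := by linarith
        calc τ r * a r d = -((a r x - β r) / (-(a r d)) * (-(a r d))) := by ring
          _ = -(a r x - β r) := by rw [div_mul_cancel₀ _ hc]
          _ = β r - a r x := by ring
      have hfeas' : ∀ r, β r ≤ a r x' := by
        intro r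
        rcases le_or_gt 0 (a r d) with h | h
        · have : 0 ≤ t * a r d := mul_nonneg ht0 h
          rw [heval r]; linarith [hx r]
        · have hrJ : r ∈ J := by simp [hJ, h]
          have htle : t ≤ τ r := Finset.inf'_le τ hrJ
          have : τ r * a r d ≤ t * a r d := mul_le_mul_of_nonpos_right htle h.le
          rw [hτmul r h] at this
          rw [heval r]; linarith
      have hLle : L x' ≤ L x := by
        have : L x' = L x + t * L d := by simp [hx', map_add, map_smul, smul_eq_mul]
        have h2 : t * L d ≤ 0 := mul_nonpos_of_nonneg_of_nonpos ht0 hdneg.le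
        linarith [this.le, this.ge]
      have hrsact : a rs x' = β rs := by
        rw [heval rs, ht, hrs, hτmul rs hrsd]; ring
      have hrsold : a rs x ≠ β rs := by
        intro h
        exact absurd (hdW rs h) (ne_of_lt hrsd)
      have hsub : (Finset.univ.filter fun r => a r x' ≠ β r) ⊆
          (Finset.univ.filter fun r => a r x ≠ β r).erase rs := by
        intro r hr
        have hr' : a r x' ≠ β r := by simpa using hr
        refine Finset.mem_erase.2 ⟨?_, ?_⟩
        · rintro rfl; exact hr' hrsact
        · simp only [Finset.mem_filter, Finset.mem_univ, true_and]
          intro h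
          exact hr' (by rw [heval r, hdW r h, mul_zero, add_zero, h])
      have hcard' : (Finset.univ.filter fun r => a r x' ≠ β r).card ≤ n := by
        have h1 := Finset.card_le_card hsub
        have h2 : rs ∈ Finset.univ.filter fun r => a r x ≠ β r := by simp [hrsold]
        rw [Finset.card_erase_of_mem h2] at h1
        omega
      obtain ⟨y, hy1, hy2, hy3⟩ := ih x' hcard' hfeas'
      exact ⟨y, hy1, hy2.trans hLle, hy3⟩


/-- Let `Box ⊆ M_ℚ` be a full-dimensional polyhedron and `Ψ` a piecewise-affine
concave function on `Box` with linear part `Ψ^lin` on `tail(Box)`. With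
`Box* = {v | ⟨v,w⟩ ≥ Ψ^lin(w) ∀ w ∈ tail(Box)}` and `Ψ*(v) = min_{u∈Box}(⟨v,u⟩ − Ψ(u))`,
the minimum is attained and finite for each `v ∈ Box*`, and `Ψ*` is concave and piecewise
affine on `Box*`. -/
theorem dual_divisorial_polytope_function
    {M : Type*} [AddCommGroup M] [Module ℚ M] [FiniteDimensional ℚ M]
    {ι : Type*} [Fintype ι] [Nonempty ι]
    {κ : Type*} [Fintype κ]
    (g : κ → Module.Dual ℚ M) (b : κ → ℚ)
    (Box : Set M) (hBox : Box = {x | ∀ j, b j ≤ g j x}) (hne : Box.Nonempty)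
    (hfull : affineSpan ℚ Box = ⊤)
    (f : ι → Module.Dual ℚ M) (c : ι → ℚ) (Ψ : M → ℚ)
    (hΨ : ∀ u ∈ Box, Ψ u = Finset.univ.inf' Finset.univ_nonempty (fun i => f i u + c i))
    (T : Set M) (hT : T = {w : M | ∀ x ∈ Box, w + x ∈ Box})
    (Ψlin : M → ℚ)
    (hΨlin : ∀ w ∈ T, ∀ u ∈ Box,
      Tendsto (fun lam : ℚ => Ψ (u + lam • w) / lam) atTop (nhds (Ψlin w)))
    (BoxStar : Set (Module.Dual ℚ M))
    (hBoxStar : BoxStar = {v | ∀ w ∈ T, Ψlin w ≤ v w}) :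
    ∃ Ψstar : Module.Dual ℚ M → ℚ,
      (∀ v ∈ BoxStar, IsLeast ((fun u => v u - Ψ u) '' Box) (Ψstar v)) ∧
      ConcaveOn ℚ BoxStar Ψstar ∧
      ∃ (k : ℕ) (p : Fin (k + 1) → M) (q : Fin (k + 1) → ℚ),
        ∀ v ∈ BoxStar,
          Ψstar v = Finset.univ.inf' Finset.univ_nonempty (fun i => v (p i) - q i) := by
  classical
  obtain ⟨u₀, hu₀⟩ := hne
  -- the recession cone of Box contains {w | ∀ j, 0 ≤ g j w}
  have hgT : ∀ w : M, (∀ j, 0 ≤ g j w) → w ∈ T := by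
    intro w hw
    rw [hT]
    intro x hx
    rw [hBox] at hx ⊢
    intro j
    have h1 := hx j
    have h2 := hw j
    have h3 : g j (w + x) = g j w + g j x := map_add _ _ _
    rw [h3]; linarith
  -- formula for Ψlin on the cone
  have hΨlin_eq : ∀ w : M, (∀ j, 0 ≤ g j w) →
      Ψlin w = Finset.univ.inf' Finset.univ_nonempty (fun i => f i w) := by
    intro w hw
    have htd := hΨlin w (hgT w hw) u₀ hu₀
    set Lw : ℚ := Finset.univ.inf' Finset.univ_nonempty (fun i => f i w) with hLw
    set A : ℚ := Finset.univ.inf' Finset.univ_nonempty (fun i => f i u₀ + c i) with hA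
    set B : ℚ := Finset.univ.sup' Finset.univ_nonempty (fun i => f i u₀ + c i) with hB
    have hbox : ∀ lam : ℚ, 0 ≤ lam → u₀ + lam • w ∈ Box := by
      intro lam hlam
      rw [hBox]
      intro j
      rw [hBox] at hu₀
      have h1 := hu₀ j
      have h2 : g j (u₀ + lam • w) = g j u₀ + lam * g j w := by
        rw [map_add, map_smul, smul_eq_mul]
      have h3 : 0 ≤ lam * g j w := mul_nonneg hlam (hw j)
      rw [h2]; linarith
    have hval : ∀ lam : ℚ, 0 < lam →
        Ψ (u₀ + lam • w) = Finset.univ.inf' Finset.univ_nonempty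
          (fun i => f i u₀ + lam * f i w + c i) := by
      intro lam hlam
      rw [hΨ _ (hbox lam hlam.le)]
      congr 1
      funext i
      rw [map_add, map_smul, smul_eq_mul]
    have hlowb : ∀ᶠ lam : ℚ in atTop, Lw + A / lam ≤ Ψ (u₀ + lam • w) / lam := by
      filter_upwards [eventually_gt_atTop (0 : ℚ)] with lam hlam
      have h1 : (lam * Lw + A) / lam = Lw + A / lam := by
        rw [add_div, mul_div_cancel_left₀ _ (ne_of_gt hlam)]
      rw [← h1, hval lam hlam, div_le_div_iff_of_pos_right hlam]
      apply Finset.le_inf'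
      intro i _
      have h2 : Lw ≤ f i w := by rw [hLw]; exact Finset.inf'_le _ (Finset.mem_univ i)
      have h3 : A ≤ f i u₀ + c i := by rw [hA]; exact Finset.inf'_le _ (Finset.mem_univ i)
      have h4 : lam * Lw ≤ lam * f i w := mul_le_mul_of_nonneg_left h2 hlam.le
      linarith
    have hupb : ∀ᶠ lam : ℚ in atTop, Ψ (u₀ + lam • w) / lam ≤ Lw + B / lam := by
      filter_upwards [eventually_gt_atTop (0 : ℚ)] with lam hlam
      have h1 : (lam * Lw + B) / lam = Lw + B / lam := by
        rw [add_div, mul_div_cancel_left₀ _ (ne_of_gt hlam)]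
      rw [← h1, hval lam hlam, div_le_div_iff_of_pos_right hlam]
      obtain ⟨i₀, _, hi₀⟩ := Finset.exists_mem_eq_inf' (Finset.univ_nonempty) (fun i => f i w)
      have h2 : Finset.univ.inf' Finset.univ_nonempty (fun i => f i u₀ + lam * f i w + c i)
          ≤ f i₀ u₀ + lam * f i₀ w + c i₀ := Finset.inf'_le _ (Finset.mem_univ i₀)
      have h3 : f i₀ u₀ + c i₀ ≤ B := by rw [hB]; exact Finset.le_sup' (fun i => f i u₀ + c i) (Finset.mem_univ i₀)
      have h4 : lam * f i₀ w = lam * Lw := by rw [hLw, ← hi₀]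
      linarith
    have hA0 : Tendsto (fun lam : ℚ => Lw + A / lam) atTop (nhds Lw) := by
      have := Tendsto.const_div_atTop (tendsto_id (α := ℚ)) A
      simpa using tendsto_const_nhds.add this
    have hB0 : Tendsto (fun lam : ℚ => Lw + B / lam) atTop (nhds Lw) := by
      have := Tendsto.const_div_atTop (tendsto_id (α := ℚ)) B
      simpa using tendsto_const_nhds.add this
    exact tendsto_nhds_unique htd
      (tendsto_of_tendsto_of_tendsto_of_le_of_le' hA0 hB0 hlowb hupb)
  -- the lifted polyhedron in M × ℚ
  set a : κ ⊕ ι → (M × ℚ) →ₗ[ℚ] ℚ :=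
    Sum.elim (fun j => (g j).comp (LinearMap.fst ℚ M ℚ))
      (fun i => (f i).comp (LinearMap.fst ℚ M ℚ) - LinearMap.snd ℚ M ℚ) with ha
  set β : κ ⊕ ι → ℚ := Sum.elim b (fun i => -(c i)) with hβ
  have ha1 : ∀ j (x : M × ℚ), a (Sum.inl j) x = g j x.1 := fun j x => rfl
  have ha2 : ∀ i (x : M × ℚ), a (Sum.inr i) x = f i x.1 - x.2 := fun i x => rfl
  have hβ1 : ∀ j, β (Sum.inl j) = b j := fun j => rfl
  have hβ2 : ∀ i, β (Sum.inr i) = -(c i) := fun i => rfl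
  have hPmem : ∀ u ∈ Box, ∀ r, β r ≤ a r (u, Ψ u) := by
    intro u hu r
    rcases r with j | i
    · rw [ha1, hβ1]
      rw [hBox] at hu
      exact hu j
    · rw [ha2, hβ2]
      have h1 : Ψ u ≤ f i u + c i := by
        rw [hΨ u hu]
        exact Finset.inf'_le _ (Finset.mem_univ i)
      simp only
      linarith
  have hPproj : ∀ x : M × ℚ, (∀ r, β r ≤ a r x) → x.1 ∈ Box ∧ x.2 ≤ Ψ x.1 := by
    intro x hx
    have hx1 : x.1 ∈ Box := by
      rw [hBox]
      intro j
      have := hx (Sum.inl j)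
      rwa [ha1, hβ1] at this
    refine ⟨hx1, ?_⟩
    rw [hΨ x.1 hx1]
    apply Finset.le_inf'
    intro i _
    have := hx (Sum.inr i)
    rw [ha2, hβ2] at this
    linarith
  -- the objective linear functionals
  set L : Module.Dual ℚ M → (M × ℚ) →ₗ[ℚ] ℚ :=
    fun v => v.comp (LinearMap.fst ℚ M ℚ) - LinearMap.snd ℚ M ℚ with hL
  have hLapp : ∀ v (x : M × ℚ), L v x = v x.1 - x.2 := fun v x => rfl
  -- recession condition for v ∈ BoxStar
  have hrecv : ∀ v ∈ BoxStar, ∀ d : M × ℚ, (∀ r, 0 ≤ a r d) → 0 ≤ L v d := by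
    intro v hv d hd
    have hw : ∀ j, 0 ≤ g j d.1 := by
      intro j
      have := hd (Sum.inl j)
      rwa [ha1] at this
    have hs : d.2 ≤ Finset.univ.inf' Finset.univ_nonempty (fun i => f i d.1) := by
      apply Finset.le_inf'
      intro i _
      have := hd (Sum.inr i)
      rw [ha2] at this
      linarith
    have h1 : Ψlin d.1 ≤ v d.1 := by
      rw [hBoxStar] at hv
      exact hv d.1 (hgT d.1 hw)
    have h2 := hΨlin_eq d.1 hw
    rw [hLapp]
    linarith [h2 ▸ h1]
  -- canonical points of the faces
  have hzex : ∀ R : Finset (κ ⊕ ι), ∃ x : M × ℚ, (∀ r, β r ≤ a r x) ∧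
      ((∃ y : M × ℚ, (∀ r ∈ R, a r y = β r) ∧ (∀ r, β r ≤ a r y)) →
        (∀ r ∈ R, a r x = β r)) := by
    intro R
    by_cases h : ∃ y : M × ℚ, (∀ r ∈ R, a r y = β r) ∧ (∀ r, β r ≤ a r y)
    · obtain ⟨y, hy1, hy2⟩ := h
      exact ⟨y, hy2, fun _ => hy1⟩
    · exact ⟨(u₀, Ψ u₀), hPmem u₀ hu₀, fun h' => absurd h' h⟩
  choose z hz1 hz2 using hzex
  -- index the faces by Fin (k+1)
  obtain ⟨k, hk⟩ : ∃ k, Fintype.card (Finset (κ ⊕ ι)) = k + 1 :=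
    ⟨Fintype.card (Finset (κ ⊕ ι)) - 1,
      (Nat.succ_pred_eq_of_pos Fintype.card_pos).symm⟩
  set E : Finset (κ ⊕ ι) ≃ Fin (k + 1) := Fintype.equivFinOfCardEq hk with hE
  set p : Fin (k + 1) → M := fun i => (z (E.symm i)).1 with hp
  set q : Fin (k + 1) → ℚ := fun i => (z (E.symm i)).2 with hq
  set Ψstar : Module.Dual ℚ M → ℚ :=
    fun v => Finset.univ.inf' Finset.univ_nonempty (fun i => v (p i) - q i) with hΨstar
  -- key lower bound
  have hlow : ∀ v ∈ BoxStar, ∀ x : M × ℚ, (∀ r, β r ≤ a r x) →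
      Ψstar v ≤ v x.1 - x.2 := by
    intro v hv x hx
    obtain ⟨y, hy1, hy2, hy3⟩ := lp_descent a β (L v) (hrecv v hv)
      (Finset.univ.filter fun r => a r x ≠ β r).card x le_rfl hx
    set R : Finset (κ ⊕ ι) := Finset.univ.filter fun r => a r y = β r with hR
    have hex : ∃ y' : M × ℚ, (∀ r ∈ R, a r y' = β r) ∧ (∀ r, β r ≤ a r y') :=
      ⟨y, fun r hr => by simpa [hR] using hr, hy1⟩
    have hzR := hz2 R hex
    have hLz : L v (z R) = L v y := by
      have hdiff : L v (z R - y) = 0 := by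
        apply hy3
        intro r hry
        have hrR : r ∈ R := by simp [hR, hry]
        rw [map_sub, hzR r hrR, hry, sub_self]
      rw [map_sub] at hdiff
      linarith
    have hpq : v (p (E R)) - q (E R) = L v (z R) := by
      rw [hp, hq, hLapp]
      simp only [Equiv.symm_apply_apply]
    calc Ψstar v ≤ v (p (E R)) - q (E R) := Finset.inf'_le _ (Finset.mem_univ _)
      _ = L v (z R) := hpq
      _ = L v y := hLz
      _ ≤ L v x := hy2
      _ = v x.1 - x.2 := hLapp v x
  refine ⟨Ψstar, ?_, ?_, k, p, q, ?_⟩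
  · -- IsLeast
    intro v hv
    constructor
    · obtain ⟨i₀, _, hi₀⟩ := Finset.exists_mem_eq_inf'
        (Finset.univ_nonempty (α := Fin (k + 1))) (fun i => v (p i) - q i)
      have hx₀P := hz1 (E.symm i₀)
      obtain ⟨hbox₀, hle₀⟩ := hPproj _ hx₀P
      refine ⟨(z (E.symm i₀)).1, hbox₀, ?_⟩
      have h1 : Ψstar v ≤ v (z (E.symm i₀)).1 - Ψ (z (E.symm i₀)).1 := by
        have := hlow v hv ((z (E.symm i₀)).1, Ψ (z (E.symm i₀)).1) (hPmem _ hbox₀)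
        simpa using this
      have h2 : Ψstar v = v (z (E.symm i₀)).1 - (z (E.symm i₀)).2 := by
        rw [hΨstar]; exact hi₀
      have h3 : v (z (E.symm i₀)).1 - Ψ (z (E.symm i₀)).1
          ≤ v (z (E.symm i₀)).1 - (z (E.symm i₀)).2 := by linarith
      simp only
      linarith
    · rintro s ⟨u, hu, rfl⟩
      have := hlow v hv (u, Ψ u) (hPmem u hu)
      simpa using this
  · -- concavity
    constructor
    · -- convexity of BoxStar
      intro v₁ h₁ v₂ h₂ s t hs ht hst
      rw [hBoxStar] at h₁ h₂ ⊢
      intro w hw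
      have e1 : s * Ψlin w ≤ s * v₁ w := mul_le_mul_of_nonneg_left (h₁ w hw) hs
      have e2 : t * Ψlin w ≤ t * v₂ w := mul_le_mul_of_nonneg_left (h₂ w hw) ht
      have happ : (s • v₁ + t • v₂) w = s * v₁ w + t * v₂ w := by
        simp [LinearMap.add_apply, LinearMap.smul_apply, smul_eq_mul]
      have h3 : s * Ψlin w + t * Ψlin w = Ψlin w := by
        rw [← add_mul, hst, one_mul]
      rw [happ]
      linarith
    · intro v₁ h₁ v₂ h₂ s t hs ht hst
      simp only [smul_eq_mul, hΨstar]
      apply Finset.le_inf'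
      intro i _
      have A1 : Ψstar v₁ ≤ v₁ (p i) - q i := Finset.inf'_le _ (Finset.mem_univ i)
      have A2 : Ψstar v₂ ≤ v₂ (p i) - q i := Finset.inf'_le _ (Finset.mem_univ i)
      have e1 : s * Ψstar v₁ ≤ s * (v₁ (p i) - q i) := mul_le_mul_of_nonneg_left A1 hs
      have e2 : t * Ψstar v₂ ≤ t * (v₂ (p i) - q i) := mul_le_mul_of_nonneg_left A2 ht
      rw [mul_sub] at e1 e2
      have happ : (s • v₁ + t • v₂) (p i) = s * v₁ (p i) + t * v₂ (p i) := by
        simp [LinearMap.add_apply, LinearMap.smul_apply, smul_eq_mul]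
      have hqe : s * q i + t * q i = q i := by rw [← add_mul, hst, one_mul]
      rw [happ]
      linarith
  · intro v _
    rfl
end

section
/- Let N' ⊆ ℤ² be the sublattice generated by 2f₁, 2f₂, and f₁+f₂ (f₁,f₂ the standard basis), and let Ñ ⊆ ℚ⁴ be the subgroup generated by the standard basis e₁,…,e₄ together with e = ½(e₁+e₂+e₃+e₄). Then the map φ : ℤ² ⊕ N' → Ñ defined by φ(e_i,0) = e_i for i=1,2 and φ(0,f_i) = ½(e_i + e_{i+2}) for i=1,2 is a well-defined group isomorphism. -/
/-- Let `N' ⊆ ℤ²` (inside `ℚ²`) be generated by `2f₁`, `2f₂`, `f₁+f₂`, and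
`Ñ ⊆ ℚ⁴` generated by `e₁,…,e₄` and `e = ½(e₁+e₂+e₃+e₄)`. The map
`φ(e_i,0) = e_i`, `φ(0,f_i) = ½(e_i + e_{i+2})`, i.e.
`φ((a₁,a₂),(b₁,b₂)) = (a₁+b₁/2, a₂+b₂/2, b₁/2, b₂/2)`, is a well-defined additive
isomorphism from `ℤ² ⊕ N'` onto `Ñ`. -/
theorem lattice_iso_grassmann
    (N' : AddSubgroup (ℚ × ℚ))
    (hN' : N' = AddSubgroup.closure {((2 : ℚ), (0 : ℚ)), (0, 2), (1, 1)})
    (Ntil : AddSubgroup (Fin 4 → ℚ))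
    (hNtil : Ntil = AddSubgroup.closure
      ({![1, 0, 0, 0], ![0, 1, 0, 0], ![0, 0, 1, 0], ![0, 0, 0, 1],
        ![1/2, 1/2, 1/2, 1/2]} : Set (Fin 4 → ℚ)))
    (D : AddSubgroup ((ℚ × ℚ) × (ℚ × ℚ)))
    (hD : D = (AddSubgroup.closure {((1 : ℚ), (0 : ℚ)), (0, 1)}).prod N')
    (φ : (ℚ × ℚ) × (ℚ × ℚ) → (Fin 4 → ℚ))
    (hφ : φ = fun p => ![p.1.1 + p.2.1 / 2, p.1.2 + p.2.2 / 2, p.2.1 / 2, p.2.2 / 2]) :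
    (∀ x ∈ D, φ x ∈ Ntil) ∧
    (∀ x y, φ (x + y) = φ x + φ y) ∧
    Set.InjOn φ D ∧
    φ '' D = Ntil := by
  have hadd : ∀ x y, φ (x + y) = φ x + φ y := by
    intro x y
    subst hφ
    funext i
    fin_cases i <;>
      simp [Prod.fst_add, Prod.snd_add] <;> ring
  set ψ : ((ℚ × ℚ) × (ℚ × ℚ)) →+ (Fin 4 → ℚ) := AddMonoidHom.mk' φ hadd with hψ
  have hψapp : ∀ x, ψ x = φ x := fun _ => rfl
  have hmem : ∀ x ∈ D, φ x ∈ Ntil := by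
    intro x hx
    rw [hD, AddSubgroup.mem_prod] at hx
    have h1 : x.1 ∈ AddSubgroup.closure {((1 : ℚ), (0 : ℚ)), (0, 1)} := hx.1
    have h2 : x.2 ∈ N' := hx.2
    have hx12 : x = (x.1, 0) + (0, x.2) := by simp
    have hA : φ (x.1, 0) ∈ Ntil := by
      have : AddSubgroup.closure {((1 : ℚ), (0 : ℚ)), (0, 1)} ≤
          Ntil.comap (ψ.comp (AddMonoidHom.inl (ℚ × ℚ) (ℚ × ℚ))) := by
        rw [AddSubgroup.closure_le]
        rintro a (rfl | rfl) <;>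
        · rw [hNtil]
          simp only [Set.mem_preimage, SetLike.mem_coe, AddSubgroup.mem_comap]
          apply AddSubgroup.subset_closure
          show φ _ ∈ _
          rw [hφ]
          norm_num
      exact this h1
    have hB : φ (0, x.2) ∈ Ntil := by
      have : AddSubgroup.closure {((2 : ℚ), (0 : ℚ)), (0, 2), (1, 1)} ≤
          Ntil.comap (ψ.comp (AddMonoidHom.inr (ℚ × ℚ) (ℚ × ℚ))) := by
        rw [AddSubgroup.closure_le]
        have e1 : (![1,0,0,0] : Fin 4 → ℚ) ∈ Ntil := by
          rw [hNtil]; exact AddSubgroup.subset_closure (by norm_num)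
        have e2 : (![0,1,0,0] : Fin 4 → ℚ) ∈ Ntil := by
          rw [hNtil]; exact AddSubgroup.subset_closure (by norm_num)
        have e3 : (![0,0,1,0] : Fin 4 → ℚ) ∈ Ntil := by
          rw [hNtil]; exact AddSubgroup.subset_closure (by norm_num)
        have e4 : (![0,0,0,1] : Fin 4 → ℚ) ∈ Ntil := by
          rw [hNtil]; exact AddSubgroup.subset_closure (by norm_num)
        have e5 : (![1/2,1/2,1/2,1/2] : Fin 4 → ℚ) ∈ Ntil := by
          rw [hNtil]; exact AddSubgroup.subset_closure (by norm_num)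
        rintro a (rfl | rfl | rfl) <;>
          simp only [Set.mem_preimage, SetLike.mem_coe, AddSubgroup.mem_comap,
            AddMonoidHom.comp_apply, AddMonoidHom.inr_apply, hψapp]
        · have : φ ((0 : ℚ × ℚ), ((2 : ℚ), (0 : ℚ))) = ![1,0,0,0] + ![0,0,1,0] := by
            rw [hφ]; funext i; fin_cases i <;> norm_num
          rw [this]; exact Ntil.add_mem e1 e3
        · have : φ ((0 : ℚ × ℚ), ((0 : ℚ), (2 : ℚ))) = ![0,1,0,0] + ![0,0,0,1] := by
            rw [hφ]; funext i; fin_cases i <;> norm_num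
          rw [this]; exact Ntil.add_mem e2 e4
        · have : φ ((0 : ℚ × ℚ), ((1 : ℚ), (1 : ℚ))) = ![1/2,1/2,1/2,1/2] := by
            rw [hφ]; funext i; fin_cases i <;> norm_num
          rw [this]; exact e5
      have := this (hN' ▸ h2)
      simpa [hψapp] using this
    rw [hx12, hadd]
    exact Ntil.add_mem hA hB
  have hinj : Function.Injective φ := by
    intro p q h
    rw [hφ] at h
    have h0 := congrFun h 0
    have h1 := congrFun h 1
    have h2 := congrFun h 2
    have h3 := congrFun h 3
    simp only [Matrix.cons_val_zero, Matrix.cons_val_one, Matrix.head_cons,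
      Matrix.cons_val_two, Matrix.tail_cons, Matrix.cons_val_three] at h0 h1 h2 h3
    have hb1 : p.2.1 = q.2.1 := by linarith
    have hb2 : p.2.2 = q.2.2 := by linarith
    have ha1 : p.1.1 = q.1.1 := by linarith
    have ha2 : p.1.2 = q.1.2 := by linarith
    exact Prod.ext (Prod.ext ha1 ha2) (Prod.ext hb1 hb2)
  refine ⟨hmem, hadd, hinj.injOn, ?_⟩
  apply Set.Subset.antisymm
  · rintro _ ⟨x, hx, rfl⟩; exact hmem x hx
  · -- Ntil ⊆ φ '' D
    have gen1 : ((1:ℚ),(0:ℚ)) ∈ AddSubgroup.closure {((1 : ℚ), (0 : ℚ)), (0, 1)} :=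
      AddSubgroup.subset_closure (by norm_num)
    have gen2 : ((0:ℚ),(1:ℚ)) ∈ AddSubgroup.closure {((1 : ℚ), (0 : ℚ)), (0, 1)} :=
      AddSubgroup.subset_closure (by norm_num)
    have n0 : ((0:ℚ),(0:ℚ)) ∈ N' := N'.zero_mem
    have n1 : ((2:ℚ),(0:ℚ)) ∈ N' := by
      rw [hN']; exact AddSubgroup.subset_closure (by norm_num)
    have n2 : ((0:ℚ),(2:ℚ)) ∈ N' := by
      rw [hN']; exact AddSubgroup.subset_closure (by norm_num)
    have n3 : ((1:ℚ),(1:ℚ)) ∈ N' := by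
      rw [hN']; exact AddSubgroup.subset_closure (by norm_num)
    have himg : (Ntil : Set (Fin 4 → ℚ)) ⊆ φ '' D := by
      rw [hNtil]
      have hsub : AddSubgroup.closure
          ({![1, 0, 0, 0], ![0, 1, 0, 0], ![0, 0, 1, 0], ![0, 0, 0, 1],
            ![1/2, 1/2, 1/2, 1/2]} : Set (Fin 4 → ℚ)) ≤ D.map ψ := by
        rw [AddSubgroup.closure_le]
        rintro v (rfl | rfl | rfl | rfl | rfl) <;>
          simp only [SetLike.mem_coe, AddSubgroup.mem_map]
        · refine ⟨(((1:ℚ),(0:ℚ)), ((0:ℚ),(0:ℚ))), ?_, ?_⟩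
          · rw [hD, AddSubgroup.mem_prod]; exact ⟨gen1, n0⟩
          · rw [hψapp, hφ]; funext i; fin_cases i <;> norm_num
        · refine ⟨(((0:ℚ),(1:ℚ)), ((0:ℚ),(0:ℚ))), ?_, ?_⟩
          · rw [hD, AddSubgroup.mem_prod]; exact ⟨gen2, n0⟩
          · rw [hψapp, hφ]; funext i; fin_cases i <;> norm_num
        · refine ⟨(((-1:ℚ),(0:ℚ)), ((2:ℚ),(0:ℚ))), ?_, ?_⟩
          · rw [hD, AddSubgroup.mem_prod]
            refine ⟨?_, n1⟩
            have := AddSubgroup.neg_mem _ gen1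
            simpa using this
          · rw [hψapp, hφ]; funext i; fin_cases i <;> norm_num
        · refine ⟨(((0:ℚ),(-1:ℚ)), ((0:ℚ),(2:ℚ))), ?_, ?_⟩
          · rw [hD, AddSubgroup.mem_prod]
            refine ⟨?_, n2⟩
            have := AddSubgroup.neg_mem _ gen2
            simpa using this
          · rw [hψapp, hφ]; funext i; fin_cases i <;> norm_num
        · refine ⟨(((0:ℚ),(0:ℚ)), ((1:ℚ),(1:ℚ))), ?_, ?_⟩
          · rw [hD, AddSubgroup.mem_prod]
            exact ⟨AddSubgroup.zero_mem _, n3⟩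
          · rw [hψapp, hφ]; funext i; fin_cases i <;> norm_num
      intro y hy
      obtain ⟨x, hx, hxe⟩ := hsub hy
      exact ⟨x, hx, hxe⟩
    exact himg
end

section
/- Let δ ⊆ Ñ_ℚ = N_ℚ × ℚ be a full-dimensional polyhedral cone, r₀ : Ñ_ℚ → ℚ the projection to the last coordinate, and suppose δ ∩ (N_ℚ × {1}) = (Δ⁺,1) and δ ∩ (N_ℚ × {−1}) = (Δ⁻,−1) with Δ⁺ nonempty. Let σ̃ = δ ∩ [r₀ ≥ 0]. If Δ⁺ = Δ₀ + Δ₁ + ⋯ + Δ_l is a Minkowski decomposition with all Δ_i having common tailcone σ = δ ∩ (N_ℚ × {0}), then the Minkowski sum (Δ₀ × {1}) + (Δ₁ × {0}) + ⋯ + (Δ_l × {0}) + σ̃ equals δ ∩ [r₀ ≥ 1]. -/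
open scoped Pointwise

/-- Let `δ ⊆ N_ℚ × ℚ` be a full-dimensional polyhedral cone generated by its
slices at heights `1`, `−1` and `0`, with `δ ∩ (N_ℚ × {1}) = Δ⁺ × {1}` nonempty. If
`Δ⁺ = Δ₀ + Δ₁ + ⋯ + Δ_l` is a Minkowski decomposition with all summands having common
tailcone `σ = δ ∩ (N_ℚ × {0})`, then with `σ̃ = δ ∩ [r₀ ≥ 0]`,
`(Δ₀ × {1}) + (Δ₁ × {0}) + ⋯ + (Δ_l × {0}) + σ̃ = δ ∩ [r₀ ≥ 1]`. -/
theorem upgraded_deformation_cone_identity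
    {N : Type*} [AddCommGroup N] [Module ℚ N] [FiniteDimensional ℚ N]
    (l : ℕ)
    (δ : Set (N × ℚ))
    (hconv : Convex ℚ δ) (h0 : (0 : N × ℚ) ∈ δ)
    (hsmul : ∀ a : ℚ, 0 ≤ a → ∀ x ∈ δ, a • x ∈ δ)
    (hfull : Submodule.span ℚ δ = ⊤)
    (hgen : δ = posSpan ({p : N × ℚ | p ∈ δ ∧ p.2 = 1} ∪ {p : N × ℚ | p ∈ δ ∧ p.2 = -1}
      ∪ {p : N × ℚ | p ∈ δ ∧ p.2 = 0}))
    (Δplus : Set N) (hplus : ∀ x : N, (x, (1 : ℚ)) ∈ δ ↔ x ∈ Δplus)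
    (hplusne : Δplus.Nonempty)
    (σ : Set N) (hσ : σ = {x : N | (x, (0 : ℚ)) ∈ δ})
    (Δ₀ : Set N) (Δ : Fin l → Set N)
    (hne₀ : Δ₀.Nonempty) (hne : ∀ i, (Δ i).Nonempty)
    (hdec : Δplus = Δ₀ + ∑ i : Fin l, Δ i)
    (htail₀ : {w : N | ∀ x ∈ Δ₀, w + x ∈ Δ₀} = σ)
    (htail : ∀ i, {w : N | ∀ x ∈ Δ i, w + x ∈ Δ i} = σ)
    (σt : Set (N × ℚ)) (hσt : σt = {p : N × ℚ | p ∈ δ ∧ 0 ≤ p.2}) :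
    (Δ₀ ×ˢ ({(1 : ℚ)} : Set ℚ)) + (∑ i : Fin l, Δ i ×ˢ ({(0 : ℚ)} : Set ℚ)) + σt
      = {p : N × ℚ | p ∈ δ ∧ 1 ≤ p.2} := by
  -- δ is closed under addition
  have hadd : ∀ x ∈ δ, ∀ y ∈ δ, x + y ∈ δ := by
    intro x hx y hy
    have hm : (1/2 : ℚ) • x + (1/2 : ℚ) • y ∈ δ := hconv hx hy (by norm_num) (by norm_num)
      (by norm_num)
    have := hsmul 2 (by norm_num) _ hm
    rwa [smul_add, smul_smul, smul_smul, show (2 : ℚ) * (1/2) = 1 by norm_num,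
      one_smul, one_smul] at this
  ext p
  constructor
  · rintro ⟨ab, hab, s, hs, rfl⟩
    obtain ⟨a, ha, b, hb, rfl⟩ := hab
    obtain ⟨g, hg, rfl⟩ := (Set.mem_finset_sum _ _ _).1 hb
    -- each g i has second coordinate 0 and first in Δ i
    have hb1 : (∑ i : Fin l, g i).1 = ∑ i : Fin l, (g i).1 := by
      simp [Prod.fst_sum]
    have hb2 : (∑ i : Fin l, g i).2 = 0 := by
      rw [Prod.snd_sum]
      exact Finset.sum_eq_zero fun i _ => ((hg (Finset.mem_univ i)).2 : (g i).2 ∈ _)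
    obtain ⟨ha1, ha2⟩ := ha
    simp only [Set.mem_singleton_iff] at ha2
    have hsum : (a.1 + (∑ i : Fin l, g i).1) ∈ Δplus := by
      rw [hdec]
      refine ⟨a.1, ha1, ∑ i : Fin l, (g i).1, ?_, by rw [hb1]⟩
      exact Set.finset_sum_mem_finset_sum _ _ _ fun i _ => (hg (Finset.mem_univ i)).1
    have hδ1 : (a + ∑ i : Fin l, g i) ∈ δ := by
      have := (hplus _).2 hsum
      have heq : (a + ∑ i : Fin l, g i) = (a.1 + (∑ i : Fin l, g i).1, (1 : ℚ)) := by
        ext <;> simp [ha2, hb2]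
      rw [heq]; exact this
    rw [hσt] at hs
    refine ⟨hadd _ hδ1 _ hs.1, ?_⟩
    simp only [Set.mem_setOf_eq, Prod.snd_add, ha2, hb2]
    linarith [hs.2]
  · rintro ⟨hp, hp2⟩
    set t := p.2 with ht
    have ht1 : (1 : ℚ) ≤ t := hp2
    have ht0 : (0 : ℚ) < t := by linarith
    have hq : (t⁻¹ : ℚ) • p ∈ δ := hsmul _ (by positivity) _ hp
    have hq2 : ((t⁻¹ : ℚ) • p).2 = 1 := by
      simp [Prod.smul_snd, ← ht, inv_mul_cancel₀ ht0.ne']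
    have hq1 : ((t⁻¹ : ℚ) • p).1 ∈ Δplus := by
      apply (hplus _).1
      have heq : (((t⁻¹ : ℚ) • p).1, (1 : ℚ)) = (t⁻¹ : ℚ) • p := Prod.ext rfl hq2.symm
      rw [heq]; exact hq
    rw [hdec] at hq1
    obtain ⟨x₀, hx₀, w, hw, hxw⟩ := hq1
    obtain ⟨g, hg, rfl⟩ := (Set.mem_finset_sum _ _ _).1 hw
    have hsδ : p - (t⁻¹ : ℚ) • p ∈ δ := by
      have heq : p - (t⁻¹ : ℚ) • p = (1 - t⁻¹ : ℚ) • p := by rw [sub_smul, one_smul]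
      rw [heq]
      refine hsmul _ ?_ _ hp
      have : t⁻¹ ≤ 1 := by
        rw [inv_le_one_iff₀]; right; exact ht1
      linarith
    have hs2 : 0 ≤ (p - (t⁻¹ : ℚ) • p).2 := by
      have : (p - (t⁻¹ : ℚ) • p).2 = t - t⁻¹ * t := by
        simp [Prod.snd_sub, Prod.smul_snd, ← ht]
      rw [this, inv_mul_cancel₀ ht0.ne']
      linarith
    refine ⟨(x₀, (1 : ℚ)) + ∑ i : Fin l, ((g i : N), (0 : ℚ)),
      ⟨(x₀, (1 : ℚ)), ⟨hx₀, rfl⟩, ∑ i : Fin l, ((g i : N), (0 : ℚ)), ?_, rfl⟩,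
      p - (t⁻¹ : ℚ) • p, ?_, ?_⟩
    · exact Set.finset_sum_mem_finset_sum _ _ _
        fun i _ => ⟨hg (Finset.mem_univ i), rfl⟩
    · rw [hσt]; exact ⟨hsδ, hs2⟩
    · have hsum : (∑ i : Fin l, ((g i : N), (0 : ℚ))) = ((∑ i : Fin l, g i : N), (0 : ℚ)) := by
        ext
        · simp [Prod.fst_sum]
        · simp [Prod.snd_sum]
      rw [hsum]
      have : ((x₀ : N), (1 : ℚ)) + ((∑ i : Fin l, g i : N), (0 : ℚ)) = (t⁻¹ : ℚ) • p := by
        ext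
        · simpa using hxw
        · simpa using hq2.symm
      rw [this]
      module
end
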